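/- (Local conditional scores are exact for feature-space conditional projective compositions.) Let 𝒜 : ℝⁿ → ℝⁿ be a C¹ diffeomorphism, let p be a probability density on ℝⁿ, and let q(z) = p(𝒜⁻¹(z)) · |det D(𝒜⁻¹)(z)| be the density of the pushforward of p under 𝒜. Let J be a finite conditioner index set, {M_j : j ∈ J} pairwise disjoint subsets of Fin n with B = Fin n \ (⋃_j M_j), and suppose the pushforward conditional family has the product form: for each 𝒥 ⊆ J, q_𝒥(z) = g(z_B) · ∏_{j∈𝒥} f_j(z_{M_j}) · ∏_{j∈J\𝒥} h_j(z_{M_j}) with all factors strictly positive and integrable. Then for every t > 0, every 𝒥 ⊆ J, every z ∈ ℝⁿ, and every i ∈ Fin n: if i ∈ M_j with j ∈ 𝒥 then ∂_i log N_t[q_𝒥](z) = ∂_i log N_t[f_j](z_{M_j}); if i ∈ M_j with j ∉ 𝒥 then ∂_i log N_t[q_𝒥](z) = ∂_i log N_t[h_j](z_{M_j}); and if i ∈ B then ∂_i log N_t[q_𝒥](z) = ∂_i log N_t[g](z_B). -/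

import Mathlib

open Real MeasureTheory

/-- The noising operator in dimension `d = card ι`:
`N_t[p](x) = ∫ p(y) · (2πt²)^(−d/2) · exp(−‖x−y‖²/(2t²)) dy`,
where `‖x−y‖² = ∑ i, (x i − y i)²` is the Euclidean norm squared. -/
noncomputable def noisingPi {ι : Type*} [Fintype ι] (p : (ι → ℝ) → ℝ) (t : ℝ)
    (x : ι → ℝ) : ℝ :=
  ∫ y : ι → ℝ, p y * ((2 * π * t ^ 2) ^ (-(Fintype.card ι : ℝ) / 2) *
    Real.exp (-(∑ i, (x i - y i) ^ 2) / (2 * t ^ 2)))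

/-!
In feature coordinates `q_𝒥` is a product of functions of pairwise disjoint coordinate blocks.
The isotropic Gaussian kernel factorizes over any splitting of the coordinates into a block `S`
and its complement, so if `Q(z) = F(z_S) · G(z_{Sᶜ})` then
`N_t[Q](z) = N_t[F](z_S) · N_t[G](z_{Sᶜ})`. Both factors are positive and differentiable
(differentiation under the integral sign, dominated by `|F|` times a bound on the kernel's
gradient), so for `i ∈ S` the `i`-th partial derivative of `log N_t[Q]` only sees
`log N_t[F]`. Choosing for `S` the block containing `i` gives the three cases. Integrability of
the complementary factor `G` comes from that of `q_𝒥`, a pushforward density, by Fubini.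
-/

open Finset

theorem mul_exp_neg_sq_div_le {t : ℝ} (ht : 0 < t) (r : ℝ) :
    r * exp (-r ^ 2 / (2 * t ^ 2)) ≤ t := by
  have hle : r / t ≤ exp (r ^ 2 / (2 * t ^ 2)) := by
    refine le_trans ?_ (add_one_le_exp _)
    rw [div_add_one (by positivity), div_le_div_iff₀ ht (by positivity)]
    nlinarith [sq_nonneg (r - t)]
  rw [neg_div, exp_neg, ← div_eq_mul_inv, div_le_iff₀ (exp_pos _), mul_comm t]
  rwa [div_le_iff₀ ht] at hle

section DependsOn

variable {ι κ M : Type*} {α : ι → Type*} {s : Set ι}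

theorem DependsOn.mul [Mul M] {f g : (Π i, α i) → M} (hf : DependsOn f s) (hg : DependsOn g s) :
    DependsOn (fun x => f x * g x) s :=
  fun _ _ h => congrArg₂ (· * ·) (hf h) (hg h)

theorem DependsOn.finset_prod [CommMonoid M] {f : κ → (Π i, α i) → M} {u : Finset κ}
    (hf : ∀ k ∈ u, DependsOn (f k) s) : DependsOn (fun x => ∏ k ∈ u, f k x) s :=
  fun _ _ h => prod_congr rfl fun k hk => hf k hk h

theorem dependsOn_compl_of_disjoint {β γ : Type*} {T S : Finset ι} (hTS : Disjoint T S)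
    (φ : (T → γ) → β) : DependsOn (fun x : ι → γ => φ fun i : {a // a ∈ T} => x i) (↑S : Set ι)ᶜ :=
  fun _ _ h => congrArg φ <| funext fun i => h i (disjoint_left.mp hTS i.2)

end DependsOn

theorem MeasureTheory.Integrable.comp_mul_abs_det_fderiv {E : Type*} [NormedAddCommGroup E]
    [NormedSpace ℝ E] [FiniteDimensional ℝ E] [MeasurableSpace E] [BorelSpace E]
    {μ : Measure E} [μ.IsAddHaarMeasure] {f : E → E} (hf : Differentiable ℝ f)
    (hf_inj : Function.Injective f) (hf_surj : Function.Surjective f) {g : E → ℝ}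
    (hg : Integrable g μ) : Integrable (fun x => g (f x) * |(fderiv ℝ f x).det|) μ := by
  have h := (integrableOn_image_iff_integrableOn_abs_det_fderiv_smul μ MeasurableSet.univ
    (fun x _ => (hf x).hasFDerivAt.hasFDerivWithinAt) hf_inj.injOn g).mp
    (by rwa [Set.image_univ, hf_surj.range_eq, integrableOn_univ])
  simpa only [integrableOn_univ, smul_eq_mul, mul_comm] using h

section NoisingKernel

variable {ι : Type*} [Fintype ι]

noncomputable def noisingKernel (t : ℝ) (x y : ι → ℝ) : ℝ :=
  (2 * π * t ^ 2) ^ (-(Fintype.card ι : ℝ) / 2) * exp (-(∑ i, (x i - y i) ^ 2) / (2 * t ^ 2))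

theorem noisingPi_eq_integral (p : (ι → ℝ) → ℝ) (t : ℝ) (x : ι → ℝ) :
    noisingPi p t x = ∫ y, p y * noisingKernel t x y := rfl

theorem noisingKernel_pos {t : ℝ} (ht : t ≠ 0) (x y : ι → ℝ) : 0 < noisingKernel t x y := by
  unfold noisingKernel; positivity

theorem noisingKernel_nonneg (t : ℝ) (x y : ι → ℝ) : 0 ≤ noisingKernel t x y := by
  unfold noisingKernel; positivity

theorem noisingKernel_le (t : ℝ) (x y : ι → ℝ) :
    noisingKernel t x y ≤ (2 * π * t ^ 2) ^ (-(Fintype.card ι : ℝ) / 2) := by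
  refine mul_le_of_le_one_right (by positivity) (exp_le_one_iff.mpr ?_)
  exact div_nonpos_of_nonpos_of_nonneg (neg_nonpos.mpr (by positivity)) (by positivity)

theorem continuous_noisingKernel (t : ℝ) (x : ι → ℝ) : Continuous (noisingKernel t x) := by
  unfold noisingKernel; fun_prop

noncomputable def noisingKernelFDeriv (t : ℝ) (x y : ι → ℝ) : (ι → ℝ) →L[ℝ] ℝ :=
  noisingKernel t x y • ∑ i, ((y i - x i) / t ^ 2) • ContinuousLinearMap.proj i

theorem continuous_noisingKernelFDeriv (t : ℝ) (x : ι → ℝ) :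
    Continuous (noisingKernelFDeriv t x) := by
  unfold noisingKernelFDeriv
  have := continuous_noisingKernel t x
  fun_prop

theorem hasFDerivAt_noisingKernel (t : ℝ) (x y : ι → ℝ) :
    HasFDerivAt (noisingKernel t · y) (noisingKernelFDeriv t x y) x := by
  have hsq (i : ι) : HasFDerivAt (fun x : ι → ℝ => (x i - y i) ^ 2)
      ((2 * (x i - y i)) • (ContinuousLinearMap.proj i : (ι → ℝ) →L[ℝ] ℝ)) x := by
    refine ((hasFDerivAt_apply i x |>.sub_const (y i)).pow 2).congr_fderiv ?_
    ext v
    simp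
  have hexp := ((HasFDerivAt.fun_sum (u := univ) fun i _ => hsq i).mul_const
    (-(2 * t ^ 2)⁻¹)).exp.const_mul ((2 * π * t ^ 2) ^ (-(Fintype.card ι : ℝ) / 2))
  have hfun : (noisingKernel t · y) = fun x => (2 * π * t ^ 2) ^ (-(Fintype.card ι : ℝ) / 2) *
      exp ((∑ i, (x i - y i) ^ 2) * -(2 * t ^ 2)⁻¹) := by
    funext x
    simp [noisingKernel, div_eq_mul_inv]
  rw [hfun]
  refine hexp.congr_fderiv ?_
  ext v
  simp only [noisingKernelFDeriv, congrFun hfun x, smul_apply, FunLike.coe_sum, Finset.sum_apply,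
    ContinuousLinearMap.proj_apply, smul_eq_mul, mul_sum]
  refine sum_congr rfl fun i _ => ?_
  field_simp
  ring

theorem noisingKernel_mul_abs_sub_le {t : ℝ} (ht : 0 < t) (x y : ι → ℝ) (i : ι) :
    noisingKernel t x y * |x i - y i| ≤ (2 * π * t ^ 2) ^ (-(Fintype.card ι : ℝ) / 2) * t := by
  have hK : noisingKernel t x y ≤
      (2 * π * t ^ 2) ^ (-(Fintype.card ι : ℝ) / 2) * exp (-(x i - y i) ^ 2 / (2 * t ^ 2)) := by
    unfold noisingKernel
    gcongr
    exact single_le_sum (f := fun k => (x k - y k) ^ 2) (fun k _ => sq_nonneg _) (mem_univ i)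
  calc noisingKernel t x y * |x i - y i|
      ≤ (2 * π * t ^ 2) ^ (-(Fintype.card ι : ℝ) / 2) * exp (-(x i - y i) ^ 2 / (2 * t ^ 2)) *
          |x i - y i| := by gcongr
    _ = (2 * π * t ^ 2) ^ (-(Fintype.card ι : ℝ) / 2) *
          (|x i - y i| * exp (-|x i - y i| ^ 2 / (2 * t ^ 2))) := by rw [sq_abs]; ring
    _ ≤ _ := by gcongr; exact mul_exp_neg_sq_div_le ht _

theorem norm_noisingKernelFDeriv_le {t : ℝ} (ht : 0 < t) (x y : ι → ℝ) :
    ‖noisingKernelFDeriv t x y‖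
      ≤ (2 * π * t ^ 2) ^ (-(Fintype.card ι : ℝ) / 2) * (Fintype.card ι / t) := by
  have hproj (i : ι) : ‖(ContinuousLinearMap.proj i : (ι → ℝ) →L[ℝ] ℝ)‖ ≤ 1 :=
    ContinuousLinearMap.opNorm_le_bound _ zero_le_one fun v => by simpa using norm_le_pi_norm v i
  have hL : ‖∑ i, ((y i - x i) / t ^ 2) • (ContinuousLinearMap.proj i : (ι → ℝ) →L[ℝ] ℝ)‖
      ≤ ∑ i, |x i - y i| / t ^ 2 := by
    refine (norm_sum_le _ _).trans (sum_le_sum fun i _ => ?_)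
    rw [norm_smul, norm_div, norm_pow, Real.norm_eq_abs, Real.norm_eq_abs, abs_sub_comm, sq_abs]
    exact mul_le_of_le_one_right (by positivity) (hproj i)
  rw [noisingKernelFDeriv, norm_smul, Real.norm_of_nonneg (noisingKernel_nonneg t x y)]
  calc _ ≤ noisingKernel t x y * ∑ i, |x i - y i| / t ^ 2 :=
        mul_le_mul_of_nonneg_left hL (noisingKernel_nonneg t x y)
    _ = ∑ i, noisingKernel t x y * |x i - y i| / t ^ 2 := by simp only [mul_sum, mul_div_assoc]
    _ ≤ ∑ _i : ι, (2 * π * t ^ 2) ^ (-(Fintype.card ι : ℝ) / 2) * t / t ^ 2 := by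
        gcongr ∑ _i, ?_ / _ with i
        exact noisingKernel_mul_abs_sub_le ht x y i
    _ = _ := by
        rw [sum_const, card_univ, nsmul_eq_mul]
        field_simp

end NoisingKernel

section NoisingOperator

variable {ι : Type*} [Fintype ι] {p : (ι → ℝ) → ℝ} {t : ℝ}

theorem MeasureTheory.Integrable.mul_noisingKernel (hp : Integrable p) (t : ℝ) (x : ι → ℝ) :
    Integrable (fun y => p y * noisingKernel t x y) :=
  hp.mul_bdd (continuous_noisingKernel t x).aestronglyMeasurable
    (.of_forall fun y => by
      rw [Real.norm_of_nonneg (noisingKernel_nonneg t x y)]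
      exact noisingKernel_le t x y)

theorem noisingPi_pos (hp : Integrable p) (hpos : ∀ y, 0 < p y) (ht : t ≠ 0) (x : ι → ℝ) :
    0 < noisingPi p t x := by
  rw [noisingPi_eq_integral, integral_pos_iff_support_of_nonneg
    (fun y => (mul_pos (hpos y) (noisingKernel_pos ht x y)).le) (hp.mul_noisingKernel t x)]
  rw [Set.eq_univ_of_forall (s := Function.support _)
    fun y => (mul_pos (hpos y) (noisingKernel_pos ht x y)).ne']
  exact isOpen_univ.measure_pos _ Set.univ_nonempty

theorem differentiable_noisingPi (hp : Integrable p) (ht : 0 < t) :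
    Differentiable ℝ (noisingPi p t) := fun x₀ =>
  (hasFDerivAt_integral_of_dominated_of_fderiv_le (F' := fun x y => p y • noisingKernelFDeriv t x y)
    (bound := fun y =>
      ‖p y‖ * ((2 * π * t ^ 2) ^ (-(Fintype.card ι : ℝ) / 2) * (Fintype.card ι / t)))
    Filter.univ_mem (.of_forall fun x => (hp.mul_noisingKernel t x).aestronglyMeasurable)
    (hp.mul_noisingKernel t x₀)
    (hp.aestronglyMeasurable.smul (continuous_noisingKernelFDeriv t x₀).aestronglyMeasurable)
    (.of_forall fun y x _ => by
      rw [norm_smul]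
      exact mul_le_mul_of_nonneg_left (norm_noisingKernelFDeriv_le ht x y) (norm_nonneg _))
    (hp.norm.mul_const _)
    (.of_forall fun y x _ => (hasFDerivAt_noisingKernel t x y).const_mul (p y))).differentiableAt

end NoisingOperator

section Blocks

variable {ι : Type*} [Fintype ι] [DecidableEq ι]

theorem integral_mul_restrict_compl (S : Finset ι) (F : ({a // a ∈ S} → ℝ) → ℝ)
    (G : ({a // a ∉ S} → ℝ) → ℝ) :
    ∫ y : ι → ℝ, F (fun i => y i) * G (fun i => y i) = (∫ u, F u) * ∫ v, G v := by
  have h := (volume_preserving_piEquivPiSubtypeProd (fun _ : ι => ℝ) (· ∈ S)).integral_comp'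
    fun w => F w.1 * G w.2
  rw [Subsingleton.elim (Finset.Subtype.fintype S) (Subtype.fintype _), ← integral_prod_mul,
    ← Measure.volume_eq_prod]
  exact h

theorem MeasureTheory.Integrable.of_mul_restrict_compl (S : Finset ι)
    {F : ({a // a ∈ S} → ℝ) → ℝ} {G : ({a // a ∉ S} → ℝ) → ℝ}
    (hFG : Integrable fun y : ι → ℝ => F (fun i => y i) * G (fun i => y i))
    (hF : ∀ u, F u ≠ 0) : Integrable G := by
  have hprod : Integrable (fun w : ({a // a ∈ S} → ℝ) × ({a // a ∉ S} → ℝ) => F w.1 * G w.2)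
      (volume.prod volume) := by
    have h := ((volume_preserving_piEquivPiSubtypeProd (fun _ : ι => ℝ) (· ∈ S)).integrable_comp_emb
      (MeasurableEquiv.measurableEmbedding _) (g := fun w => F w.1 * G w.2)).mp hFG
    rw [Subsingleton.elim (Finset.Subtype.fintype S) (Subtype.fintype _)]
    exact h
  obtain ⟨u, hu⟩ := hprod.prod_right_ae.exists
  simpa [inv_mul_cancel_left₀ (hF u)] using hu.const_mul (F u)⁻¹

theorem noisingKernel_eq_mul_restrict_compl (S : Finset ι) {t : ℝ} (ht : t ≠ 0) (x y : ι → ℝ) :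
    noisingKernel t x y =
      noisingKernel t (fun i : {a // a ∈ S} => x i) (fun i => y i) *
        noisingKernel t (fun i : {a // a ∉ S} => x i) (fun i => y i) := by
  have hcard : (Fintype.card {a // a ∈ S} : ℝ) + Fintype.card {a // a ∉ S} = Fintype.card ι := by
    rw [← Nat.cast_add, ← Fintype.card_sum, Fintype.card_congr (Equiv.sumCompl _)]
  have hsum : ∑ i, (x i - y i) ^ 2 =
      ∑ i : {a // a ∈ S}, (x i - y i) ^ 2 + ∑ i : {a // a ∉ S}, (x i - y i) ^ 2 := by
    convert (Fintype.sum_subtype_add_sum_subtype (· ∈ S) _).symm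
  unfold noisingKernel
  rw [hsum, neg_add, add_div, exp_add, ← hcard, neg_add, add_div, rpow_add (by positivity)]
  ring

theorem noisingPi_mul_restrict_compl (S : Finset ι) {t : ℝ} (ht : t ≠ 0)
    (F : ({a // a ∈ S} → ℝ) → ℝ) (G : ({a // a ∉ S} → ℝ) → ℝ) (x : ι → ℝ) :
    noisingPi (fun y : ι → ℝ => F (fun i => y i) * G (fun i => y i)) t x =
      noisingPi F t (fun i : {a // a ∈ S} => x i) *
        noisingPi G t (fun i : {a // a ∉ S} => x i) := by
  simp only [noisingPi_eq_integral, noisingKernel_eq_mul_restrict_compl S ht x]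
  rw [← integral_mul_restrict_compl]
  congr 1 with y
  ring

theorem fderiv_log_noisingPi_mul_restrict_compl (S : Finset ι) {t : ℝ} (ht : 0 < t)
    {F : ({a // a ∈ S} → ℝ) → ℝ} {G : ({a // a ∉ S} → ℝ) → ℝ}
    (hF_int : Integrable F) (hF_pos : ∀ u, 0 < F u) (hG_int : Integrable G) (hG_pos : ∀ v, 0 < G v)
    (x : ι → ℝ) {i : ι} (hi : i ∈ S) :
    fderiv ℝ (fun x' => log (noisingPi (fun y : ι → ℝ => F (fun i => y i) * G (fun i => y i)) t x'))
        x (Pi.single i 1) =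
      fderiv ℝ (fun u => log (noisingPi F t u)) (fun i : {a // a ∈ S} => x i)
        (Pi.single ⟨i, hi⟩ 1) := by
  let πS : (ι → ℝ) →L[ℝ] {a // a ∈ S} → ℝ := .pi fun a => .proj a.1
  let πSc : (ι → ℝ) →L[ℝ] {a // a ∉ S} → ℝ := .pi fun a => .proj a.1
  have hlogF := ((differentiable_noisingPi hF_int ht).log fun u =>
    (noisingPi_pos hF_int hF_pos ht.ne' u).ne') (πS x)
  have hlogG := ((differentiable_noisingPi hG_int ht).log fun v =>
    (noisingPi_pos hG_int hG_pos ht.ne' v).ne') (πSc x)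
  have hsplit :
      (fun x' => log (noisingPi (fun y : ι → ℝ => F (fun i => y i) * G (fun i => y i)) t x')) =
        fun x' => log (noisingPi F t (πS x')) + log (noisingPi G t (πSc x')) := by
    funext x'
    rw [noisingPi_mul_restrict_compl S ht.ne', log_mul (noisingPi_pos hF_int hF_pos ht.ne' _).ne'
      (noisingPi_pos hG_int hG_pos ht.ne' _).ne']
    rfl
  have hS : πS (Pi.single i 1) = Pi.single ⟨i, hi⟩ 1 := by
    ext a
    simp [πS, Pi.single_apply, Subtype.ext_iff]
  have hSc : πSc (Pi.single i 1) = 0 := by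
    ext a
    simp [πSc, Pi.single_eq_of_ne (show (a : ι) ≠ i from fun h => a.2 (h ▸ hi))]
  have hderiv : HasFDerivAt (fun x' => log (noisingPi F t (πS x')) + log (noisingPi G t (πSc x')))
      ((fderiv ℝ (fun u => log (noisingPi F t u)) (πS x)).comp πS +
        (fderiv ℝ (fun v => log (noisingPi G t v)) (πSc x)).comp πSc) x :=
    (hlogF.hasFDerivAt.comp x πS.hasFDerivAt).add (hlogG.hasFDerivAt.comp x πSc.hasFDerivAt)
  rw [hsplit, hderiv.fderiv, add_apply, ContinuousLinearMap.comp_apply,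
    ContinuousLinearMap.comp_apply, hS, hSc, map_zero, add_zero]
  rfl

theorem fderiv_log_noisingPi_of_eq_mul_dependsOn (S : Finset ι) {t : ℝ} (ht : 0 < t)
    {F : ({a // a ∈ S} → ℝ) → ℝ} (hF_int : Integrable F) (hF_pos : ∀ u, 0 < F u)
    {R : (ι → ℝ) → ℝ} (hR : DependsOn R (↑S)ᶜ) (hR_pos : ∀ y, 0 < R y)
    {Q : (ι → ℝ) → ℝ} (hQ : ∀ y, Q y = F (fun i : {a // a ∈ S} => y i) * R y)
    (hQ_int : Integrable Q) (x : ι → ℝ) {i : ι} (hi : i ∈ S) :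
    fderiv ℝ (fun x' => log (noisingPi Q t x')) x (Pi.single i 1) =
      fderiv ℝ (fun u => log (noisingPi F t u)) (fun i : {a // a ∈ S} => x i)
        (Pi.single ⟨i, hi⟩ 1) := by
  let G : ({a // a ∉ S} → ℝ) → ℝ := fun v => R fun a => if h : a ∈ S then 0 else v ⟨a, h⟩
  have hQG : Q = fun y => F (fun i => y i) * G (fun i => y i) := by
    funext y
    rw [hQ]
    congr 1
    exact hR fun a ha => by simp [Finset.mem_coe.not.mp ha]
  rw [hQG] at hQ_int ⊢
  exact fderiv_log_noisingPi_mul_restrict_compl S ht hF_int hF_pos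
    (hQ_int.of_mul_restrict_compl S fun u => (hF_pos u).ne') (fun _ => hR_pos _) x hi

end Blocks

theorem local_conditional_scores_exact_for_feature_space_cpc_general
    (n : ℕ) {J : Type*} [Fintype J] [DecidableEq J]
    -- 𝒜 is a C¹ diffeomorphism of ℝⁿ
    (A : (Fin n → ℝ) ≃ (Fin n → ℝ))
    (hA' : ContDiff ℝ 1 (⇑A.symm))
    -- the conditional family p_𝒥 of probability densities on ℝⁿ (pixel space)
    (p : Finset J → (Fin n → ℝ) → ℝ)
    (hp_int : ∀ 𝒥, Integrable (p 𝒥))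
    -- q_𝒥 is the density of the pushforward of p_𝒥 under 𝒜:
    -- q(z) = p(𝒜⁻¹ z) · |det D(𝒜⁻¹)(z)|
    (q : Finset J → (Fin n → ℝ) → ℝ)
    (hq : ∀ 𝒥 z, q 𝒥 z =
      p 𝒥 (A.symm z) * |LinearMap.det ((fderiv ℝ (⇑A.symm) z) :
        (Fin n → ℝ) →ₗ[ℝ] (Fin n → ℝ))|)
    -- pairwise disjoint blocks M_j, with background block B
    (M : J → Finset (Fin n))
    (hdisj : ∀ j k : J, j ≠ k → Disjoint (M j) (M k))
    (B : Finset (Fin n)) (hB : B = (Finset.univ.biUnion fun j : J => M j)ᶜ)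
    -- the pushforward conditional family has the CPC product form,
    -- with all factors strictly positive and integrable
    (g : ({i // i ∈ B} → ℝ) → ℝ)
    (f h : ∀ j : J, ({i // i ∈ M j} → ℝ) → ℝ)
    (hg_pos : ∀ z, 0 < g z) (hg_int : Integrable g)
    (hf_pos : ∀ j z, 0 < f j z) (hf_int : ∀ j, Integrable (f j))
    (hh_pos : ∀ j z, 0 < h j z) (hh_int : ∀ j, Integrable (h j))
    (hq_prod : ∀ (𝒥 : Finset J) (z : Fin n → ℝ),
      q 𝒥 z = g (fun i : {a // a ∈ B} => z i.1) *
        (∏ j ∈ 𝒥, f j (fun i : {a // a ∈ M j} => z i.1)) *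
        ∏ j ∈ 𝒥ᶜ, h j (fun i : {a // a ∈ M j} => z i.1)) :
    ∀ t > (0 : ℝ), ∀ (𝒥 : Finset J) (z : Fin n → ℝ) (i : Fin n),
      -- case i ∈ M_j with j ∈ 𝒥: the score follows the conditional factor f_j
      (∀ (j : J) (hij : i ∈ M j), j ∈ 𝒥 →
        fderiv ℝ (fun z' => Real.log (noisingPi (q 𝒥) t z')) z (Pi.single i 1)
          = fderiv ℝ (fun w => Real.log (noisingPi (f j) t w))
              (fun i' : {a // a ∈ M j} => z i'.1)
              (Pi.single (⟨i, hij⟩ : {a // a ∈ M j}) 1))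
      -- case i ∈ M_j with j ∉ 𝒥: the score follows the unconditional factor h_j
      ∧ (∀ (j : J) (hij : i ∈ M j), j ∉ 𝒥 →
        fderiv ℝ (fun z' => Real.log (noisingPi (q 𝒥) t z')) z (Pi.single i 1)
          = fderiv ℝ (fun w => Real.log (noisingPi (h j) t w))
              (fun i' : {a // a ∈ M j} => z i'.1)
              (Pi.single (⟨i, hij⟩ : {a // a ∈ M j}) 1))
      -- case i ∈ B: the score follows the background factor g
      ∧ (∀ hiB : i ∈ B,
        fderiv ℝ (fun z' => Real.log (noisingPi (q 𝒥) t z')) z (Pi.single i 1)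
          = fderiv ℝ (fun w => Real.log (noisingPi g t w))
              (fun i' : {a // a ∈ B} => z i'.1)
              (Pi.single (⟨i, hiB⟩ : {a // a ∈ B}) 1)) := by
  intro t ht 𝒥 z i
  -- Merging `f` and `h` into one family `φ` turns the two block cases into one.
  let φ : ∀ j, ({a // a ∈ M j} → ℝ) → ℝ := fun j => if j ∈ 𝒥 then f j else h j
  have hφ_int (j : J) : Integrable (φ j) := by by_cases hj : j ∈ 𝒥 <;> simp [φ, hj, hf_int, hh_int]
  have hφ_pos (j : J) (u) : 0 < φ j u := by by_cases hj : j ∈ 𝒥 <;> simp [φ, hj, hf_pos, hh_pos]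
  have hq_φ (y : Fin n → ℝ) : q 𝒥 y =
      g (fun i : {a // a ∈ B} => y i) * ∏ j, φ j (fun i : {a // a ∈ M j} => y i) := by
    rw [hq_prod, mul_assoc, ← prod_mul_prod_compl 𝒥]
    congr 2 <;> refine prod_congr rfl fun j hj => ?_ <;> simp_all [φ]
  have hq_int : Integrable (q 𝒥) :=
    ((hp_int 𝒥).comp_mul_abs_det_fderiv (hA'.differentiable one_ne_zero) A.symm.injective
      A.symm.surjective).congr (.of_forall fun y => (hq 𝒥 y).symm)
  have hMB (j : J) : Disjoint (M j) B := by
    rw [hB]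
    exact disjoint_compl_right_iff.mpr (subset_biUnion_of_mem _ (mem_univ j))
  have hM (j : J) (hij : i ∈ M j) := by
    have hR : DependsOn (fun y : Fin n → ℝ => g (fun i : {a // a ∈ B} => y i) *
        ∏ k ∈ univ.erase j, φ k (fun i : {a // a ∈ M k} => y i)) (↑(M j))ᶜ :=
      (dependsOn_compl_of_disjoint (hMB j).symm g).mul (.finset_prod fun k hk =>
        dependsOn_compl_of_disjoint (hdisj k j (ne_of_mem_erase hk)) (φ k))
    exact fderiv_log_noisingPi_of_eq_mul_dependsOn (M j) ht (hφ_int j) (hφ_pos j) hR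
      (fun y => mul_pos (hg_pos _) (prod_pos fun k _ => hφ_pos k _))
      (fun y => by rw [hq_φ, ← mul_prod_erase univ _ (mem_univ j)]; ring) hq_int z hij
  refine ⟨fun j hij hj => ?_, fun j hij hj => ?_, fun hiB => ?_⟩
  · simpa [φ, hj] using hM j hij
  · simpa [φ, hj] using hM j hij
  · exact fderiv_log_noisingPi_of_eq_mul_dependsOn B ht hg_int hg_pos
      (.finset_prod fun k _ => dependsOn_compl_of_disjoint (hMB k) (φ k))
      (fun y => prod_pos fun k _ => hφ_pos k _) hq_φ hq_int z hiB

theorem local_conditional_scores_exact_for_feature_space_cpc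
    (n : ℕ) {J : Type*} [Fintype J] [DecidableEq J]
    -- 𝒜 is a C¹ diffeomorphism of ℝⁿ
    (A : (Fin n → ℝ) ≃ (Fin n → ℝ))
    (hA : ContDiff ℝ 1 (⇑A)) (hA' : ContDiff ℝ 1 (⇑A.symm))
    -- the conditional family p_𝒥 of probability densities on ℝⁿ (pixel space)
    (p : Finset J → (Fin n → ℝ) → ℝ)
    (hp_nonneg : ∀ 𝒥 x, 0 ≤ p 𝒥 x) (hp_int : ∀ 𝒥, Integrable (p 𝒥))
    (hp_mass : ∀ 𝒥, ∫ x, p 𝒥 x = 1)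
    -- q_𝒥 is the density of the pushforward of p_𝒥 under 𝒜:
    -- q(z) = p(𝒜⁻¹ z) · |det D(𝒜⁻¹)(z)|
    (q : Finset J → (Fin n → ℝ) → ℝ)
    (hq : ∀ 𝒥 z, q 𝒥 z =
      p 𝒥 (A.symm z) * |LinearMap.det ((fderiv ℝ (⇑A.symm) z) :
        (Fin n → ℝ) →ₗ[ℝ] (Fin n → ℝ))|)
    -- pairwise disjoint blocks M_j, with background block B
    (M : J → Finset (Fin n))
    (hdisj : ∀ j k : J, j ≠ k → Disjoint (M j) (M k))
    (B : Finset (Fin n)) (hB : B = (Finset.univ.biUnion fun j : J => M j)ᶜ)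
    -- the pushforward conditional family has the CPC product form,
    -- with all factors strictly positive and integrable
    (g : ({i // i ∈ B} → ℝ) → ℝ)
    (f h : ∀ j : J, ({i // i ∈ M j} → ℝ) → ℝ)
    (hg_pos : ∀ z, 0 < g z) (hg_int : Integrable g)
    (hf_pos : ∀ j z, 0 < f j z) (hf_int : ∀ j, Integrable (f j))
    (hh_pos : ∀ j z, 0 < h j z) (hh_int : ∀ j, Integrable (h j))
    (hq_prod : ∀ (𝒥 : Finset J) (z : Fin n → ℝ),
      q 𝒥 z = g (fun i : {a // a ∈ B} => z i.1) *
        (∏ j ∈ 𝒥, f j (fun i : {a // a ∈ M j} => z i.1)) *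
        ∏ j ∈ 𝒥ᶜ, h j (fun i : {a // a ∈ M j} => z i.1)) :
    ∀ t > (0 : ℝ), ∀ (𝒥 : Finset J) (z : Fin n → ℝ) (i : Fin n),
      -- case i ∈ M_j with j ∈ 𝒥: the score follows the conditional factor f_j
      (∀ (j : J) (hij : i ∈ M j), j ∈ 𝒥 →
        fderiv ℝ (fun z' => Real.log (noisingPi (q 𝒥) t z')) z (Pi.single i 1)
          = fderiv ℝ (fun w => Real.log (noisingPi (f j) t w))
              (fun i' : {a // a ∈ M j} => z i'.1)
              (Pi.single (⟨i, hij⟩ : {a // a ∈ M j}) 1))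
      -- case i ∈ M_j with j ∉ 𝒥: the score follows the unconditional factor h_j
      ∧ (∀ (j : J) (hij : i ∈ M j), j ∉ 𝒥 →
        fderiv ℝ (fun z' => Real.log (noisingPi (q 𝒥) t z')) z (Pi.single i 1)
          = fderiv ℝ (fun w => Real.log (noisingPi (h j) t w))
              (fun i' : {a // a ∈ M j} => z i'.1)
              (Pi.single (⟨i, hij⟩ : {a // a ∈ M j}) 1))
      -- case i ∈ B: the score follows the background factor g
      ∧ (∀ hiB : i ∈ B,
        fderiv ℝ (fun z' => Real.log (noisingPi (q 𝒥) t z')) z (Pi.single i 1)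
          = fderiv ℝ (fun w => Real.log (noisingPi g t w))
              (fun i' : {a // a ∈ B} => z i'.1)
              (Pi.single (⟨i, hiB⟩ : {a // a ∈ B}) 1)) :=
  local_conditional_scores_exact_for_feature_space_cpc_general n A hA' p hp_int q hq M hdisj B hB g
    f h hg_pos hg_int hf_pos hf_int hh_pos hh_int hq_prod
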